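/- Let A be an m_a × r matrix and C an m_c × r matrix over a field, and let B be an m_a × s matrix. Form the block matrix M = [[A, B], [C, 0]]. If rank A < rank C = r, then rank M > rank [A B]. -/

import Mathlib

/-!
Since `rank A < r`, some `x ≠ 0` has `A x = 0`, and since `rank C = r`, `C x ≠ 0`. The column
`M (x, 0) = (0, C x)` is then a nonzero vector in the column space of `M` killed by the projection
onto the top rows, which maps the column space of `M` onto that of `[A B]`; so that projection
loses at least one dimension.
-/

open Module

theorem Submodule.finrank_map_lt_finrank {K V W : Type*} [DivisionRing K] [AddCommGroup V]
    [Module K V] [AddCommGroup W] [Module K W] (S : Submodule K V) [FiniteDimensional K S]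
    (f : V →ₗ[K] W) {v : V} (hvS : v ∈ S) (hv : v ≠ 0) (hfv : f v = 0) :
    finrank K (S.map f) < finrank K S := by
  have hker : LinearMap.ker (f.domRestrict S) ≠ ⊥ :=
    (Submodule.ne_bot_iff _).2 ⟨⟨v, hvS⟩, hfv, fun h => hv (congrArg Subtype.val h)⟩
  have hrank := (f.domRestrict S).finrank_range_add_finrank_ker
  rw [LinearMap.range_domRestrict] at hrank
  have hker_pos := Submodule.finrank_eq_zero.not.2 hker
  omega

namespace Matrix

variable {K m n m₁ m₂ : Type*} [Field K] [Fintype n]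

theorem rank_add_finrank_ker_mulVecLin (A : Matrix m n K) :
    A.rank + finrank K (LinearMap.ker A.mulVecLin) = Fintype.card n := by
  rw [rank, LinearMap.finrank_range_add_finrank_ker, finrank_fintype_fun_eq_card]

theorem exists_mulVec_eq_zero_of_rank_lt (A : Matrix m n K) (h : A.rank < Fintype.card n) :
    ∃ x ≠ 0, A *ᵥ x = 0 := by
  have hrank := A.rank_add_finrank_ker_mulVecLin
  obtain ⟨x, hx, hx0⟩ := Submodule.exists_mem_ne_zero_of_ne_bot (p := LinearMap.ker A.mulVecLin)
    (by rw [Ne, ← Submodule.finrank_eq_zero (R := K)]; omega)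
  exact ⟨x, hx0, hx⟩

theorem mulVec_ne_zero_of_rank_eq {A : Matrix m n K} (h : A.rank = Fintype.card n) {x : n → K}
    (hx : x ≠ 0) : A *ᵥ x ≠ 0 := by
  have hrank := A.rank_add_finrank_ker_mulVecLin
  have hker : LinearMap.ker A.mulVecLin = ⊥ := by
    rw [← Submodule.finrank_eq_zero (R := K)]; omega
  exact fun hAx => hx (ker_mulVecLin_eq_bot_iff.1 hker x hAx)

theorem rank_lt_rank_fromRows (A₁ : Matrix m₁ n K) (A₂ : Matrix m₂ n K) {x : n → K}
    (h₁ : A₁ *ᵥ x = 0) (h₂ : A₂ *ᵥ x ≠ 0) : A₁.rank < (fromRows A₁ A₂).rank := by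
  have hcomp :
      A₁.mulVecLin = (LinearMap.funLeft K K Sum.inl).comp (fromRows A₁ A₂).mulVecLin := by
    ext v i; simp [fromRows_mulVec, LinearMap.funLeft_apply]
  rw [rank, rank, hcomp, LinearMap.range_comp]
  refine Submodule.finrank_map_lt_finrank _ _ (LinearMap.mem_range_self _ x) ?_ ?_
  · rw [mulVecLin_apply, fromRows_mulVec]
    exact fun h => h₂ (funext fun i => congrFun h (Sum.inr i))
  · ext i; simp [fromRows_mulVec, LinearMap.funLeft_apply, h₁]

end Matrix

/-- Block matrix rank rule: if `rank A < rank C = r`, then the rank of the block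
matrix `[[A, B], [C, 0]]` is strictly bigger than the rank of `[A B]`. -/
theorem rank_fromBlocks_gt_of_rank_lt_rank_eq
    {K : Type*} [Field K] {ma mc r s : ℕ}
    (A : Matrix (Fin ma) (Fin r) K) (B : Matrix (Fin ma) (Fin s) K)
    (C : Matrix (Fin mc) (Fin r) K)
    (hAC : A.rank < C.rank) (hC : C.rank = r) :
    (Matrix.fromBlocks A B C 0).rank > (Matrix.fromCols A B).rank := by
  obtain ⟨x, hx0, hAx⟩ := A.exists_mulVec_eq_zero_of_rank_lt (by simpa [hC] using hAC)
  have hCx : C.mulVec x ≠ 0 := Matrix.mulVec_ne_zero_of_rank_eq (by simpa using hC) hx0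
  rw [← Matrix.fromRows_fromCols_eq_fromBlocks]
  refine Matrix.rank_lt_rank_fromRows _ _ (x := Sum.elim x 0) ?_ ?_
  · simp [hAx]
  · simpa [Matrix.fromCols_mulVec_sumElim] using hCx
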